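/- Every word in L(E^♯) = L(χ(E_b^♯)) is block complete: it factors uniquely as a concatenation of full expanded blocks φ(x₁)φ(x₂)⋯φ(x_n) with each x_t ∈ Π_{E_b}. -/

import Mathlib

namespace BD

/-- Language-level First: symbols beginning some word of `L`. -/
def LFirst {α : Type*} (L : Set (List α)) : Set α := {x | ∃ w, x :: w ∈ L}

/-- Language-level Last. -/
def LLast {α : Type*} (L : Set (List α)) : Set α := {x | ∃ w, w ++ [x] ∈ L}

/-- Language-level Follow. -/
def LFollow {α : Type*} (L : Set (List α)) (x : α) : Set α :=
  {y | ∃ u v, u ++ x :: y :: v ∈ L}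

/-- The list of symbol occurrences of a regular expression. -/
def rchars {α : Type*} : RegularExpression α → List α
  | .zero => []
  | .epsilon => []
  | .char a => [a]
  | .plus p q => rchars p ++ rchars q
  | .comp p q => rchars p ++ rchars q
  | .star p => rchars p

/-- The Glushkov automaton of a (marked) language `L` over positions `π`,
with labelling map `f` dropping the marks. States are `Option π`, `none` being initial. -/
def glushkov {π β : Type*} (L : Set (List π)) (f : π → β) : NFA β (Option π) where
  step q b :=
    match q with
    | none => {s | ∃ y, y ∈ LFirst L ∧ f y = b ∧ s = some y}
    | some x => {s | ∃ y, y ∈ LFollow L x ∧ f y = b ∧ s = some y}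
  start := {none}
  accept := {s | ∃ y, y ∈ LLast L ∧ s = some y} ∪ {s | s = none ∧ [] ∈ L}

/-- Determinism of an automaton. -/
def Det {β σ : Type*} (A : NFA β σ) : Prop :=
  (∃ i, A.start = {i}) ∧
  ∀ p b q₁ q₂, q₁ ∈ A.step p b → q₂ ∈ A.step p b → q₁ = q₂

/-- `k`-lookahead determinism of an automaton. -/
def kLA {β σ : Type*} (A : NFA β σ) (k : ℕ) : Prop :=
  (∃ i, A.start = {i}) ∧
  ∀ p b q₁ q₂, q₁ ∈ A.step p b → q₂ ∈ A.step p b → q₁ ≠ q₂ →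
    ∀ w : List β, w.length = k - 1 → A.evalFrom {q₁} w = ∅ ∨ A.evalFrom {q₂} w = ∅

/-- `k`-block determinism of a block automaton (labels are nonempty words of length ≤ k,
single initial state, no outgoing label a prefix of another outgoing label). -/
def kBD {γ σ : Type*} (A : NFA (List γ) σ) (k : ℕ) : Prop :=
  (∃ i, A.start = {i}) ∧
  (∀ q b, (A.step q b).Nonempty → 1 ≤ b.length ∧ b.length ≤ k) ∧
  (∀ p b₁ b₂ q₁ q₂, q₁ ∈ A.step p b₁ → q₂ ∈ A.step p b₂ →
      (b₁, q₁) ≠ (b₂, q₂) → ¬ b₁ <+: b₂)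

/-- A language over `γ` is `k`-block deterministic if it is specified by a block
regular expression (given by its marked version `E` over positions `π` together with
the dropping map `f` to blocks) whose Glushkov automaton is `k`-block deterministic. -/
def IsKBlockDet {γ : Type} (L : Set (List γ)) (k : ℕ) : Prop :=
  ∃ (π : Type) (E : RegularExpression π) (f : π → List γ),
    (rchars E).Nodup ∧
    kBD (glushkov E.matches' f) k ∧
    L = {w | ∃ ws ∈ E.matches', (ws.map f).flatten = w}

/-- A language is `k`-lookahead deterministic if specified by a regular expression
whose Glushkov automaton is `k`-lookahead deterministic. -/
def IsKLookaheadDet {γ : Type} (L : Set (List γ)) (k : ℕ) : Prop :=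
  ∃ (π : Type) (E : RegularExpression π) (f : π → γ),
    (rchars E).Nodup ∧
    kLA (glushkov E.matches' f) k ∧
    L = {w | ∃ ws ∈ E.matches', ws.map f = w}

/-- A language is one-unambiguous if specified by a regular expression with
deterministic Glushkov automaton. -/
def IsOneUnambiguous {γ : Type} (L : Set (List γ)) : Prop :=
  ∃ (π : Type) (E : RegularExpression π) (f : π → γ),
    (rchars E).Nodup ∧
    Det (glushkov E.matches' f) ∧
    L = {w | ∃ ws ∈ E.matches', ws.map f = w}

/-- Reachability in an automaton. -/
def Reach {β σ : Type*} (A : NFA β σ) (p q : σ) : Prop := ∃ w, q ∈ A.evalFrom {p} w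

/-- `O` is an orbit (strongly connected component) of `A`. -/
def IsOrbit {β σ : Type*} (A : NFA β σ) (O : Set σ) : Prop :=
  ∃ q, O = {p | Reach A p q ∧ Reach A q p}

/-- A non-trivial orbit: one containing a cycle. -/
def NonTrivial {β σ : Type*} (A : NFA β σ) (O : Set σ) : Prop :=
  ∃ p ∈ O, ∃ w : List β, w ≠ [] ∧ p ∈ A.evalFrom {p} w

/-- In-gate of an orbit. -/
def InGate {β σ : Type*} (A : NFA β σ) (O : Set σ) (q : σ) : Prop :=
  q ∈ O ∧ (q ∈ A.start ∨ ∃ p ∉ O, ∃ b, q ∈ A.step p b)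

/-- Out-gate of an orbit. -/
def OutGate {β σ : Type*} (A : NFA β σ) (O : Set σ) (q : σ) : Prop :=
  q ∈ O ∧ (q ∈ A.accept ∨ ∃ p ∉ O, ∃ b, p ∈ A.step q b)

end BD

namespace BD

/-- Expansion of a marked block into the word of its letter occurrences. -/
def expand {π γ : Type*} (f : π → List γ) (x : π) : List (γ × π × ℕ) :=
  (f x).zipIdx.map (fun p => (p.1, x, p.2))

/-- The blockwise expansion morphism `φ`. -/
def phi {π γ : Type*} (f : π → List γ) (ws : List π) : List (γ × π × ℕ) :=
  (ws.map (expand f)).flatten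

/-- The regular expression of a single word. -/
def word2re {α : Type*} (l : List α) : RegularExpression α :=
  l.foldr (fun a r => RegularExpression.char a * r) 1

/-- The expansion `χ` replacing each marked block by the concatenation of its
letter occurrences. -/
def chi {π γ : Type*} (f : π → List γ) : RegularExpression π → RegularExpression (γ × π × ℕ)
  | .zero => 0
  | .epsilon => 1
  | .char x => word2re (expand f x)
  | .plus p q => chi f p + chi f q
  | .comp p q => chi f p * chi f q
  | .star p => .star (chi f p)

lemma expand_ne_nil {π γ : Type*} (f : π → List γ) (hf : ∀ x, f x ≠ []) (x : π) :
    expand f x ≠ [] := by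
  simp [expand, hf x]

lemma phi_cons {π γ : Type*} (f : π → List γ) (x : π) (xs : List π) :
    phi f (x :: xs) = expand f x ++ phi f xs := by simp [phi]

lemma phi_append {π γ : Type*} (f : π → List γ) (xs ys : List π) :
    phi f (xs ++ ys) = phi f xs ++ phi f ys := by simp [phi]

lemma expand_head {π γ : Type*} (f : π → List γ) {x : π} {a : γ} {t : List γ}
    (h : f x = a :: t) :
    expand f x = (a, x, 0) :: (t.zipIdx 1).map (fun p => (p.1, x, p.2)) := by
  simp [expand, h, List.zipIdx_cons]

lemma phi_inj {π γ : Type*} (f : π → List γ) (hf : ∀ x, f x ≠ []) :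
    Function.Injective (phi f) := by
  intro xs
  induction xs with
  | nil =>
    intro ys h
    cases ys with
    | nil => rfl
    | cons y ys =>
      exfalso
      rw [phi_cons] at h
      simp [phi] at h
      exact expand_ne_nil f hf y h.1
  | cons x xs ih =>
    intro ys h
    cases ys with
    | nil =>
      exfalso
      rw [phi_cons] at h
      simp [phi] at h
      exact expand_ne_nil f hf x h.1
    | cons y ys =>
      rw [phi_cons, phi_cons] at h
      obtain ⟨a, t, hx⟩ := List.exists_cons_of_ne_nil (hf x)
      obtain ⟨b, s, hy⟩ := List.exists_cons_of_ne_nil (hf y)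
      have hxy : x = y := by
        have := congrArg List.head? h
        rw [expand_head f hx, expand_head f hy] at this
        simp at this
        exact this.2
      subst hxy
      have := List.append_cancel_left h
      rw [ih this]
lemma word2re_matches {α : Type*} (l : List α) :
    (word2re l).matches' = {l} := by
  induction l with
  | nil => simp [word2re]; rfl
  | cons a t ih =>
    show (RegularExpression.char a * word2re t).matches' = {a :: t}
    rw [RegularExpression.matches'_mul, ih, RegularExpression.matches'_char]
    ext w
    simp only [Language.mem_mul, Set.mem_singleton_iff]
    constructor
    · rintro ⟨u, rfl, v, rfl, rfl⟩; rfl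
    · rintro rfl; exact ⟨[a], rfl, t, rfl, rfl⟩

lemma exists_phi {γ π : Type} (f : π → List γ) (E : RegularExpression π) :
    ∀ w ∈ (chi f E).matches', ∃ xs : List π, phi f xs = w := by
  induction E with
  | zero => intro w hw; exact absurd hw (by simp [chi])
  | epsilon =>
    intro w hw
    have : w = [] := by simpa [chi, Language.mem_one] using hw
    exact ⟨[], by simp [phi, this]⟩
  | char x =>
    intro w hw
    rw [show chi f (RegularExpression.char x) = word2re (expand f x) from rfl,
      word2re_matches] at hw
    exact ⟨[x], by simpa [phi] using hw.symm⟩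
  | plus p q ihp ihq =>
    intro w hw
    rcases (by simpa [chi, Language.mem_add] using hw : w ∈ (chi f p).matches' ∨ w ∈ (chi f q).matches') with h | h
    · exact ihp w h
    · exact ihq w h
  | comp p q ihp ihq =>
    intro w hw
    rw [show chi f (p.comp q) = chi f p * chi f q from rfl,
      RegularExpression.matches'_mul] at hw
    obtain ⟨u, hu, v, hv, rfl⟩ := hw
    obtain ⟨xs, rfl⟩ := ihp u hu
    obtain ⟨ys, rfl⟩ := ihq v hv
    exact ⟨xs ++ ys, (phi_append f xs ys)⟩
  | star p ih =>
    intro w hw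
    rw [show chi f (RegularExpression.star p) = RegularExpression.star (chi f p) from rfl,
      RegularExpression.matches'_star, Language.mem_kstar] at hw
    obtain ⟨L, rfl, hL⟩ := hw
    induction L with
    | nil => exact ⟨[], by simp [phi]⟩
    | cons u L ihL =>
      obtain ⟨xs, hxs⟩ := ih u (hL u (by simp))
      obtain ⟨ys, hys⟩ := ihL (fun y hy => hL y (by simp [hy]))
      exact ⟨xs ++ ys, by rw [phi_append, hxs, hys]; simp⟩

/-- Every word of `L(χ(E_b♯))` is block complete: it factors uniquely as a
concatenation `φ(x₁)⋯φ(x_n)` of full expanded blocks. -/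
theorem stmt14 : ∀ (γ π : Type) (f : π → List γ) (E : RegularExpression π),
    (∀ x : π, f x ≠ []) →
    ∀ w ∈ (chi f E).matches', ∃! xs : List π, phi f xs = w := by
  intro γ π f E hf w hw
  obtain ⟨xs, hxs⟩ := exists_phi f E w hw
  exact ⟨xs, hxs, fun ys hys => phi_inj f hf (hys.trans hxs.symm)⟩

end BD
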